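/- arXiv:0908.2017 — 3 statements merged into one kernel-verified Lean document; each statement's English description precedes it below -/
import Mathlib

section
/- Let Γ be a connected k-regular graph on n vertices with k ≥ 2 and diameter at least 3. Then Γ has an eigenvalue θ different from k with |θ| > √(k/2). -/
/-!
Let `x, y` be vertices at distance at least `3` and `f = e_x - e_y`. Since `x` and `y` have no
common neighbour, `‖A f‖² = 2k = k ‖f‖²`; expanding `f` in an orthonormal eigenbasis of `A` shows
that `f` has a nonzero component along an eigenvector whose eigenvalue satisfies `θ² ≥ k`. On a
connected `k`-regular graph the `k`-eigenvectors are constant, hence orthogonal to `f`, so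
`θ ≠ k`, and `|θ| ≥ √k > √(k/2)` (for `k = 0` use `θ ≠ 0`).
-/

open SimpleGraph

/-- `θ` is an eigenvalue of the (real) adjacency matrix of `G`. -/
def IsAdjEigenvalue {V : Type*} [Fintype V] [DecidableEq V] (G : SimpleGraph V)
    [DecidableRel G.Adj] (θ : ℝ) : Prop :=
  ∃ v : V → ℝ, v ≠ 0 ∧ (G.adjMatrix ℝ).mulVec v = θ • v

open Matrix

open scoped InnerProductSpace

namespace LinearMap.IsSymmetric

variable {𝕜 E : Type*} [RCLike 𝕜] [NormedAddCommGroup E] [InnerProductSpace 𝕜 E]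
  [FiniteDimensional 𝕜 E] {T : E →ₗ[𝕜] E}

theorem exists_hasEigenvector_inner_ne_zero_of_mul_norm_sq_le (hT : T.IsSymmetric) {x : E}
    (hx : x ≠ 0) {c : ℝ} (h : c * ‖x‖ ^ 2 ≤ ‖T x‖ ^ 2) :
    ∃ (μ : ℝ) (v : E), Module.End.HasEigenvector T μ v ∧ ⟪v, x⟫_𝕜 ≠ 0 ∧ c ≤ μ ^ 2 := by
  set b := hT.eigenvectorBasis rfl
  set μ := hT.eigenvalues rfl
  have hcoeff (i) : ‖⟪b i, T x⟫_𝕜‖ ^ 2 = μ i ^ 2 * ‖⟪b i, x⟫_𝕜‖ ^ 2 := by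
    rw [← hT, hT.apply_eigenvectorBasis, inner_smul_left, RCLike.conj_ofReal, norm_mul,
      RCLike.norm_ofReal, mul_pow, sq_abs]
  by_contra! hall
  have hsmall (i) (hi : ⟪b i, x⟫_𝕜 ≠ 0) : μ i ^ 2 < c :=
    hall _ _ (hT.hasEigenvector_eigenvectorBasis rfl i) hi
  obtain ⟨i₀, hi₀⟩ : ∃ i, ⟪b i, x⟫_𝕜 ≠ 0 := by
    by_contra! hzero
    exact hx (by simpa [hzero] using (b.sum_repr' x).symm)
  have hlt : ‖T x‖ ^ 2 < c * ‖x‖ ^ 2 := by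
    rw [← b.sum_sq_norm_inner_right, ← b.sum_sq_norm_inner_right, Finset.mul_sum]
    refine Finset.sum_lt_sum (fun i _ => ?_) ⟨i₀, Finset.mem_univ _, ?_⟩ <;> rw [hcoeff]
    · rcases eq_or_ne ⟪b i, x⟫_𝕜 0 with hi | hi
      · simp [hi]
      · exact mul_le_mul_of_nonneg_right (hsmall i hi).le (by positivity)
    · exact mul_lt_mul_of_pos_right (hsmall i₀ hi₀) (by positivity)
  linarith

end LinearMap.IsSymmetric

namespace Matrix

variable {n R : Type*} [Fintype n]

theorem IsHermitian.exists_mulVec_eq_smul_dotProduct_ne_zero [DecidableEq n]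
    {A : Matrix n n ℝ} (hA : A.IsHermitian) {x : n → ℝ} (hx : x ≠ 0) {c : ℝ}
    (h : c * (x ⬝ᵥ x) ≤ A *ᵥ x ⬝ᵥ A *ᵥ x) :
    ∃ (μ : ℝ) (v : n → ℝ), A *ᵥ v = μ • v ∧ v ⬝ᵥ x ≠ 0 ∧ c ≤ μ ^ 2 := by
  have hinner (v w : n → ℝ) : ⟪WithLp.toLp 2 v, WithLp.toLp 2 w⟫_ℝ = v ⬝ᵥ w := by
    rw [EuclideanSpace.inner_toLp_toLp, star_trivial, dotProduct_comm]
  have hnorm (w : n → ℝ) : ‖WithLp.toLp 2 w‖ ^ 2 = w ⬝ᵥ w := by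
    rw [← real_inner_self_eq_norm_sq, hinner]
  obtain ⟨μ, v, hv, hvx, hμ⟩ :=
    (isSymmetric_toEuclideanLin_iff.mpr hA).exists_hasEigenvector_inner_ne_zero_of_mul_norm_sq_le
      (x := WithLp.toLp 2 x) (by simpa using hx) (c := c) (by rwa [hnorm, toLpLin_toLp, hnorm])
  refine ⟨μ, WithLp.ofLp v, ?_, by rwa [← hinner], hμ⟩
  simpa using congrArg WithLp.ofLp (Module.End.mem_eigenspace_iff.mp hv.1)

theorem IsSymm.mulVec_dotProduct_mulVec [CommSemiring R] {M : Matrix n n R} (hM : M.IsSymm)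
    (v : n → R) : M *ᵥ v ⬝ᵥ M *ᵥ v = v ⬝ᵥ (M * M) *ᵥ v := by
  nth_rw 1 [← hM.eq, ← vecMul_transpose, transpose_transpose]
  rw [← dotProduct_mulVec, mulVec_mulVec]

theorem single_sub_single_dotProduct_mulVec [DecidableEq n] [CommRing R] (M : Matrix n n R)
    (i j : n) :
    (Pi.single i 1 - Pi.single j 1) ⬝ᵥ M *ᵥ (Pi.single i 1 - Pi.single j 1) =
      M i i - M i j - M j i + M j j := by
  simp only [dotProduct_sub, sub_dotProduct, mulVec_sub, mulVec_single_one, single_one_dotProduct,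
    col_apply]
  ring

end Matrix

namespace SimpleGraph

variable {V : Type*} [Fintype V] [DecidableEq V] {G : SimpleGraph V} [DecidableRel G.Adj]

theorem adjMatrix_pow_apply_eq_zero_of_lt_dist {R : Type*} [Semiring R] {n : ℕ} {x y : V}
    (h : n < G.dist x y) : (G.adjMatrix R ^ n) x y = 0 := by
  rw [adjMatrix_pow_apply_eq_card_walk, Fintype.card_eq_zero_iff.mpr, Nat.cast_zero]
  exact ⟨fun ⟨p, hp⟩ => (G.dist_le p).not_gt (hp ▸ h)⟩

theorem IsRegularOfDegree.apply_eq_of_adjMatrix_mulVec_eq_smul {k : ℕ}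
    (hreg : G.IsRegularOfDegree k) (hconn : G.Preconnected) {v : V → ℝ}
    (hv : G.adjMatrix ℝ *ᵥ v = (k : ℝ) • v) (x y : V) : v x = v y := by
  refine G.lapMatrix_mulVec_eq_zero_iff_forall_reachable.mp ?_ x y (hconn x y)
  ext i
  rw [lapMatrix, sub_mulVec, Pi.sub_apply, degMatrix_mulVec_apply, hv, hreg i]
  simp

end SimpleGraph

theorem Real.sqrt_half_lt_abs_of_le_sq {k θ : ℝ} (hk : 0 ≤ k) (hle : k ≤ θ ^ 2) (hne : θ ≠ k) :
    √(k / 2) < |θ| := by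
  rw [← Real.sqrt_sq_eq_abs]
  refine Real.sqrt_lt_sqrt (by positivity) ?_
  rcases hk.eq_or_lt with rfl | hk
  · simpa [sq_pos_iff] using hne
  · linarith

theorem stmt0_general {V : Type*} [Fintype V] [DecidableEq V] (G : SimpleGraph V)
    [DecidableRel G.Adj] (k : ℕ)
    (hconn : G.Connected) (hreg : G.IsRegularOfDegree k)
    (hdiam : ∃ x y : V, 3 ≤ G.dist x y) :
    ∃ θ : ℝ, IsAdjEigenvalue G θ ∧ θ ≠ (k : ℝ) ∧ Real.sqrt ((k : ℝ) / 2) < |θ| := by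
  obtain ⟨x, y, hxy⟩ := hdiam
  have hne : x ≠ y := by
    rintro rfl
    simp at hxy
  set f : V → ℝ := Pi.single x 1 - Pi.single y 1
  have hf : f ≠ 0 := fun h => by simpa [f, hne] using congrFun h x
  have hff : f ⬝ᵥ f = 2 := by
    nth_rw 2 [← one_mulVec f]
    rw [single_sub_single_dotProduct_mulVec]
    simp [one_apply, hne, hne.symm, one_add_one_eq_two]
  have hAf : G.adjMatrix ℝ *ᵥ f ⬝ᵥ G.adjMatrix ℝ *ᵥ f = 2 * k := by
    rw [G.isSymm_adjMatrix.mulVec_dotProduct_mulVec, single_sub_single_dotProduct_mulVec,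
      adjMatrix_mul_self_apply_self, adjMatrix_mul_self_apply_self, ← sq,
      adjMatrix_pow_apply_eq_zero_of_lt_dist (by omega),
      adjMatrix_pow_apply_eq_zero_of_lt_dist (by rw [G.dist_comm]; omega), hreg x, hreg y]
    ring
  obtain ⟨θ, v, hv, hvf, hθ⟩ :=
    (G.isHermitian_adjMatrix ℝ).exists_mulVec_eq_smul_dotProduct_ne_zero hf (c := k)
      (by rw [hff, hAf, mul_comm])
  have hθk : θ ≠ k := by
    rintro rfl
    refine hvf ?_
    simp [f, hreg.apply_eq_of_adjMatrix_mulVec_eq_smul hconn.preconnected hv x y]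
  exact ⟨θ, ⟨v, fun h => hvf (by simp [h]), hv⟩, hθk,
    Real.sqrt_half_lt_abs_of_le_sq (by positivity) hθ hθk⟩

theorem stmt0 {V : Type*} [Fintype V] [DecidableEq V] (G : SimpleGraph V)
    [DecidableRel G.Adj] (k : ℕ) (hk : 2 ≤ k)
    (hconn : G.Connected) (hreg : G.IsRegularOfDegree k)
    (hdiam : ∃ x y : V, 3 ≤ G.dist x y) :
    ∃ θ : ℝ, IsAdjEigenvalue G θ ∧ θ ≠ (k : ℝ) ∧ Real.sqrt ((k : ℝ) / 2) < |θ| :=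
  stmt0_general G k hconn hreg hdiam
end

section
/- Let Γ be a distance-regular graph with valency k ≥ 2, diameter D ≥ 2, intersection number a₁, and smallest eigenvalue θ_D ≥ -m for some integer m ≥ 2. Then k < m(a₁ + m). -/
open SimpleGraph

/-- `G` is distance-regular with diameter `D` and intersection arrays `b`, `c`:
for vertices `x, y` at distance `i`, `y` has exactly `c i` neighbours at distance
`i - 1` from `x` and exactly `b i` neighbours at distance `i + 1` from `x`.
In particular the valency is `b 0`. -/
def IsDRG {V : Type*} [Fintype V] (G : SimpleGraph V) (D : ℕ) (b c : ℕ → ℕ) : Prop :=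
  G.Connected ∧ (∀ x y : V, G.dist x y ≤ D) ∧ (∃ x y : V, G.dist x y = D) ∧
  ∀ (i : ℕ) (x y : V), G.dist x y = i →
    {z : V | G.Adj y z ∧ G.dist x z = i - 1}.ncard = c i ∧
    {z : V | G.Adj y z ∧ G.dist x z = i + 1}.ncard = b i


/-! If every adjacency eigenvalue is at least `-m`, then `A + m I` is positive semidefinite.
Evaluate its quadratic form at `v = -k eₓ + m 𝟙_{N(x)} - e_z`, where `d(x, z) = 2`: as each of
the `k` neighbours of `x` has `a₁` neighbours in `N(x)`, and `x`, `z` have `γ ≥ 1` common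
neighbours, it equals `m (k (m a₁ + m² - k) + 1 - 2γ)`, and its nonnegativity forces
`k < m (a₁ + m)`. -/

open Finset Matrix

namespace SimpleGraph

variable {V : Type*} [Fintype V] (G : SimpleGraph V)

section Spectral

variable [DecidableEq V] [DecidableRel G.Adj]

theorem posSemidef_adjMatrix_add_smul_one {r : ℝ} (h : ∀ θ, IsAdjEigenvalue G θ → -r ≤ θ) :
    (G.adjMatrix ℝ + r • 1).PosSemidef := by
  have hB : (G.adjMatrix ℝ + r • 1).IsHermitian :=
    (G.isHermitian_adjMatrix ℝ).add (isHermitian_one.smul (IsSelfAdjoint.all r))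
  rw [hB.posSemidef_iff_eigenvalues_nonneg]
  intro i
  have hA : G.adjMatrix ℝ *ᵥ hB.eigenvectorBasis i =
      (hB.eigenvalues i - r) • hB.eigenvectorBasis i := by
    have := hB.mulVec_eigenvectorBasis i
    rw [add_mulVec, smul_mulVec, one_mulVec] at this
    rw [sub_smul, ← this, add_sub_cancel_right]
  have hv : (hB.eigenvectorBasis i : V → ℝ) ≠ 0 := fun h0 =>
    hB.eigenvectorBasis.orthonormal.ne_zero i (by ext j; exact congrFun h0 j)
  have := h _ ⟨_, hv, hA⟩
  simp only [Pi.zero_apply]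
  linarith

theorem indicator_dotProduct (s : Finset V) (w : V → ℝ) :
    (s : Set V).indicator 1 ⬝ᵥ w = ∑ u ∈ s, w u := by
  simp [dotProduct, Set.indicator_apply, sum_ite_mem]

theorem indicator_dotProduct_indicator (s t : Finset V) :
    (s : Set V).indicator 1 ⬝ᵥ (t : Set V).indicator (1 : V → ℝ) = #(s ∩ t) := by
  simp [indicator_dotProduct, Set.indicator_apply, sum_ite_mem]

theorem indicator_dotProduct_adjMatrix_mulVec_indicator (s t : Finset V) :
    (s : Set V).indicator 1 ⬝ᵥ G.adjMatrix ℝ *ᵥ (t : Set V).indicator 1 =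
      ((∑ u ∈ s, #(G.neighborFinset u ∩ t) : ℕ) : ℝ) := by
  simp [indicator_dotProduct, Set.indicator_apply, sum_ite_mem]

theorem sum_card_neighborFinset_inter_singleton (s : Finset V) (y : V) :
    ∑ u ∈ s, #(G.neighborFinset u ∩ {y}) = #(s ∩ G.neighborFinset y) := by
  simp only [inter_singleton, apply_ite card, card_singleton, card_empty, sum_boole, Nat.cast_id,
    mem_neighborFinset]
  rw [← filter_mem_eq_inter]
  simp only [mem_neighborFinset, G.adj_comm y]

theorem dotProduct_adjMatrix_add_smul_one_mulVec_eq {x z : V} (hne : x ≠ z) (hxz : ¬G.Adj x z)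
    {a : ℕ} (ha : ∀ u ∈ G.neighborFinset x, #(G.neighborFinset u ∩ G.neighborFinset x) = a)
    (r : ℝ) :
    let v : V → ℝ := -(G.degree x : ℝ) • ({x} : Set V).indicator 1 +
      r • (G.neighborFinset x : Set V).indicator 1 - ({z} : Set V).indicator 1
    v ⬝ᵥ (G.adjMatrix ℝ + r • 1) *ᵥ v = r * (G.degree x * (r * a + r ^ 2 - G.degree x) + 1 -
      2 * #(G.neighborFinset x ∩ G.neighborFinset z)) := by
  have hsum : ∑ u ∈ G.neighborFinset x, #(G.neighborFinset u ∩ G.neighborFinset x) =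
      G.degree x * a := by
    simp [sum_congr rfl ha]
  simp only [← coe_singleton, add_mulVec, mulVec_add, mulVec_sub, smul_mulVec, mulVec_smul,
    dotProduct_add, add_dotProduct, sub_dotProduct, dotProduct_sub, smul_dotProduct,
    dotProduct_smul, one_mulVec, indicator_dotProduct_adjMatrix_mulVec_indicator,
    indicator_dotProduct_indicator, sum_singleton, sum_card_neighborFinset_inter_singleton, hsum,
    inter_self, card_neighborFinset_eq_degree]
  have hzx : ¬G.Adj z x := fun h => hxz h.symm
  simp only [mem_neighborFinset, SimpleGraph.irrefl, not_false_eq_true, inter_singleton_of_notMem,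
    card_empty, CharP.cast_eq_zero, smul_eq_mul, mul_zero, zero_add, hzx, sub_zero, card_singleton,
    Nat.cast_one, mul_one, add_zero, inter_comm, mem_singleton, hne.symm, mul_neg, add_neg_cancel,
    neg_mul, Nat.cast_mul, hxz, zero_sub]
  ring

theorem degree_lt_of_posSemidef {r : ℝ} (hr : 0 < r) (hpsd : (G.adjMatrix ℝ + r • 1).PosSemidef)
    {x y z : V} (hxy : G.Adj x y) (hyz : G.Adj y z) (hxz : ¬G.Adj x z) (hne : x ≠ z) {a : ℕ}
    (ha : ∀ u ∈ G.neighborFinset x, #(G.neighborFinset u ∩ G.neighborFinset x) = a) :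
    (G.degree x : ℝ) < r * (a + r) := by
  have hcommon : 1 ≤ #(G.neighborFinset x ∩ G.neighborFinset z) :=
    card_pos.mpr ⟨y, by simp [hxy, hyz.symm]⟩
  have hQ := hpsd.dotProduct_mulVec_nonneg (-(G.degree x : ℝ) • ({x} : Set V).indicator 1 +
      r • (G.neighborFinset x : Set V).indicator 1 - ({z} : Set V).indicator 1)
  rw [star_trivial, G.dotProduct_adjMatrix_add_smul_one_mulVec_eq hne hxz ha] at hQ
  by_contra! hge
  have : (G.degree x : ℝ) * (r * a + r ^ 2 - G.degree x) ≤ 0 :=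
    mul_nonpos_of_nonneg_of_nonpos (by positivity) (by linarith)
  have : (1 : ℝ) ≤ #(G.neighborFinset x ∩ G.neighborFinset z) := by exact_mod_cast hcommon
  nlinarith

end Spectral

namespace IsDRG

variable {G} {D : ℕ} {b c : ℕ → ℕ}

theorem exists_adj_adj_not_adj_ne (h : IsDRG G D b c) (hD : 2 ≤ D) :
    ∃ x y z, G.Adj x y ∧ G.Adj y z ∧ ¬G.Adj x z ∧ x ≠ z := by
  obtain ⟨x, w, hxw⟩ := h.2.2.1
  obtain ⟨p, hp⟩ := h.1.exists_walk_length_eq_dist x w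
  exact p.exists_adj_adj_not_adj_ne hp (by omega)

variable [DecidableRel G.Adj]

theorem card_filter_neighborFinset (h : IsDRG G D b c) (x y : V) :
    #{z ∈ G.neighborFinset y | G.dist x z = G.dist x y - 1} = c (G.dist x y) ∧
      #{z ∈ G.neighborFinset y | G.dist x z = G.dist x y + 1} = b (G.dist x y) := by
  have hncard (P : V → Prop) [DecidablePred P] :
      {z | G.Adj y z ∧ P z}.ncard = #{z ∈ G.neighborFinset y | P z} := by
    rw [← Set.ncard_coe_finset]
    congr
    ext
    simp
  simpa only [hncard] using h.2.2.2 _ x y rfl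

theorem degree_eq (h : IsDRG G D b c) (u : V) : G.degree u = b 0 := by
  have hb := (h.card_filter_neighborFinset u u).2
  rwa [dist_self, zero_add, filter_true_of_mem fun z hz => dist_eq_one_iff_adj.mpr
    ((mem_neighborFinset G u z).mp hz), card_neighborFinset_eq_degree] at hb

theorem card_neighborFinset_inter [DecidableEq V] (h : IsDRG G D b c) {a1 : ℕ}
    (ha1 : a1 + b 1 + c 1 = b 0) {x u : V} (hxu : G.Adj x u) :
    #(G.neighborFinset u ∩ G.neighborFinset x) = a1 := by
  have hd : G.dist x u = 1 := dist_eq_one_iff_adj.mpr hxu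
  obtain ⟨hc, hb⟩ := h.card_filter_neighborFinset x u
  rw [hd] at hc hb
  have hsplit := card_eq_sum_card_fiberwise (f := G.dist x) (t := range 3)
    fun z (hz : z ∈ G.neighborFinset u) => by
      have := h.1.dist_triangle (u := x) (v := u) (w := z)
      rw [hd, dist_eq_one_iff_adj.mpr ((mem_neighborFinset G u z).mp hz)] at this
      exact mem_range.mpr (by omega)
  have hmid : #{z ∈ G.neighborFinset u | G.dist x z = 1} =
      #(G.neighborFinset u ∩ G.neighborFinset x) := by
    rw [← filter_mem_eq_inter]
    simp only [dist_eq_one_iff_adj, mem_neighborFinset]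
  simp only [sum_range_succ, sum_range_zero, card_neighborFinset_eq_degree, h.degree_eq] at hsplit
  simp only [Nat.sub_self, Nat.reduceAdd] at hc hb
  omega

end IsDRG

end SimpleGraph

theorem stmt3_general {V : Type*} [Fintype V] [DecidableEq V] (G : SimpleGraph V)
    [DecidableRel G.Adj] (D : ℕ) (b c : ℕ → ℕ) (hDRG : IsDRG G D b c)
    (hD : 2 ≤ D) (m : ℕ) (hm : 2 ≤ m)
    (a1 : ℕ) (ha1 : a1 + b 1 + c 1 = b 0)
    (hmin : ∀ θ : ℝ, IsAdjEigenvalue G θ → -(m : ℝ) ≤ θ) :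
    (b 0 : ℝ) < (m : ℝ) * ((a1 : ℝ) + m) := by
  obtain ⟨x, y, z, hxy, hyz, hxz, hne⟩ := hDRG.exists_adj_adj_not_adj_ne hD
  have hlocal := G.degree_lt_of_posSemidef (by exact_mod_cast (by omega : 0 < m))
    (G.posSemidef_adjMatrix_add_smul_one hmin) hxy hyz hxz hne
    fun u hu => hDRG.card_neighborFinset_inter ha1 ((mem_neighborFinset G x u).mp hu)
  rwa [hDRG.degree_eq] at hlocal

theorem stmt3 {V : Type*} [Fintype V] [DecidableEq V] (G : SimpleGraph V)
    [DecidableRel G.Adj] (D : ℕ) (b c : ℕ → ℕ) (hDRG : IsDRG G D b c)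
    (hk : 2 ≤ b 0) (hD : 2 ≤ D) (m : ℕ) (hm : 2 ≤ m)
    (a1 : ℕ) (ha1 : a1 + b 1 + c 1 = b 0)
    (hmin : ∀ θ : ℝ, IsAdjEigenvalue G θ → -(m : ℝ) ≤ θ) :
    (b 0 : ℝ) < (m : ℝ) * ((a1 : ℝ) + m) :=
  stmt3_general G D b c hDRG hD m hm a1 ha1 hmin
end

section
/- Let Γ be a geometric distance-regular graph with respect to a set 𝒞 of Delsarte cliques, with diameter D ≥ 2 and c₂ ≥ 2. Then τ₂ ≥ ψ₁, where ψ₁ is the number of neighbors in a Delsarte clique C of a vertex at distance 1 from C, and τ₂ is the number of cliques in 𝒞 containing y and at distance 1 from x, for vertices x, y at distance 2. -/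
open SimpleGraph

/-!
Pick `x, y` at distance `2` with a common neighbour `z` and let `C ∈ 𝒞` be the clique through
the edge `zy`; then `x ∉ C` and `x` has `ψ₁` neighbours in `C`. Send each such neighbour `w` to
the clique of `𝒞` through the edge `xw`: it contains `x`, misses `y` (as `x ≁ y`) and contains the
neighbour `w` of `y`, so it is one of the `τ₂` cliques counted for the pair `(y, x)`. Two
neighbours `w ≠ w'` with the same image would put the edge `ww'` into that clique and into `C`,
forcing it to be `C`, which does not contain `x`.
-/

namespace SimpleGraph

variable {V : Type*} {G : SimpleGraph V}

theorem dist_eq_two_of_adj_of_adj {x z y : V} (hxz : G.Adj x z) (hzy : G.Adj z y) (hne : x ≠ y)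
    (hxy : ¬G.Adj x y) : G.dist x y = 2 := by
  have hlt := (hxz.reachable.trans hzy.reachable).one_lt_dist_of_ne_of_not_adj hne hxy
  have hle := dist_le (Walk.cons hxz (Walk.cons hzy Walk.nil))
  simp only [Walk.length_cons, Walk.length_nil] at hle
  omega

theorem ncard_adj_mem_clique_le_ncard_cliques [Finite V] {𝒞 : Set (Finset V)}
    (hclq : ∀ C ∈ 𝒞, G.IsClique (C : Set V))
    (hedge : ∀ x y : V, G.Adj x y → ∃! C : Finset V, C ∈ 𝒞 ∧ x ∈ C ∧ y ∈ C)
    {C : Finset V} (hC : C ∈ 𝒞) {x y : V} (hyC : y ∈ C) (hxC : x ∉ C) (hxy : ¬G.Adj x y) :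
    {w : V | w ∈ C ∧ G.Adj x w}.ncard ≤
      {E : Finset V | E ∈ 𝒞 ∧ x ∈ E ∧ y ∉ E ∧ ∃ w ∈ E, G.Adj y w}.ncard := by
  choose! f hf𝒞 hxf hwf using fun w (hxw : G.Adj x w) => (hedge x w hxw).exists
  have hne : x ≠ y := by rintro rfl; exact hxC hyC
  refine Set.ncard_le_ncard_of_injOn f ?_ ?_
  · rintro w ⟨hwC, hxw⟩
    have hwy : w ≠ y := by rintro rfl; exact hxy hxw
    exact ⟨hf𝒞 w hxw, hxf w hxw, fun hyf => hxy (hclq _ (hf𝒞 w hxw) (hxf w hxw) hyf hne),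
      w, hwf w hxw, hclq C hC hyC hwC hwy.symm⟩
  · rintro w ⟨hwC, hxw⟩ w' ⟨hw'C, hxw'⟩ hff'
    by_contra hww'
    have hfC : f w = C := (hedge w w' (hclq C hC hwC hw'C hww')).unique
      ⟨hf𝒞 w hxw, hwf w hxw, hff' ▸ hwf w' hxw'⟩ ⟨hC, hwC, hw'C⟩
    exact hxC (hfC ▸ hxf w hxw)

end SimpleGraph

theorem stmt17_general {V : Type*} [Fintype V] (G : SimpleGraph V)
    (D : ℕ) (b c : ℕ → ℕ) (hDRG : IsDRG G D b c)
    (hD : 2 ≤ D)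
    (𝒞 : Set (Finset V))
    (hclq : ∀ C ∈ 𝒞, G.IsClique (C : Set V))
    -- Γ is geometric w.r.t. 𝒞: every edge lies in a unique clique of 𝒞
    (hedge : ∀ x y : V, G.Adj x y → ∃! C : Finset V, C ∈ 𝒞 ∧ x ∈ C ∧ y ∈ C)
    (ψ₁ τ₂ : ℕ)
    -- ψ₁: number of neighbours in C of a vertex at distance 1 from C
    (hψ : ∀ C ∈ 𝒞, ∀ x : V, x ∉ C → (∃ z ∈ C, G.Adj x z) →
      {z : V | z ∈ C ∧ G.Adj x z}.ncard = ψ₁)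
    -- τ₂: number of cliques of 𝒞 containing y at distance 1 from x, for d(x,y) = 2
    (hτ : ∀ x y : V, G.dist x y = 2 →
      {C : Finset V | C ∈ 𝒞 ∧ y ∈ C ∧ x ∉ C ∧ ∃ z ∈ C, G.Adj x z}.ncard = τ₂) :
    ψ₁ ≤ τ₂ := by
  obtain ⟨-, -, ⟨x₀, y₀, hD₀⟩, -⟩ := hDRG
  obtain ⟨p, hp⟩ :=
    (Reachable.of_dist_ne_zero (by omega : G.dist x₀ y₀ ≠ 0)).exists_walk_length_eq_dist
  obtain ⟨x, z, y, hxz, hzy, hxy, hne⟩ := p.exists_adj_adj_not_adj_ne hp (by omega)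
  obtain ⟨C, ⟨hC, hzC, hyC⟩, -⟩ := hedge z y hzy
  have hxC : x ∉ C := fun hxC => hxy (hclq C hC hxC hyC hne)
  calc ψ₁ = {w : V | w ∈ C ∧ G.Adj x w}.ncard := (hψ C hC x hxC ⟨z, hzC, hxz⟩).symm
    _ ≤ {E : Finset V | E ∈ 𝒞 ∧ x ∈ E ∧ y ∉ E ∧ ∃ w ∈ E, G.Adj y w}.ncard :=
      ncard_adj_mem_clique_le_ncard_cliques hclq hedge hC hyC hxC hxy
    _ = τ₂ := hτ y x (by rw [dist_comm, dist_eq_two_of_adj_of_adj hxz hzy hne hxy])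

theorem stmt17 {V : Type*} [Fintype V] [DecidableEq V] (G : SimpleGraph V)
    [DecidableRel G.Adj] (D : ℕ) (b c : ℕ → ℕ) (hDRG : IsDRG G D b c)
    (hD : 2 ≤ D) (hc2 : 2 ≤ c 2)
    (θ : ℝ) (hθ : IsAdjEigenvalue G θ) (hmin : ∀ η : ℝ, IsAdjEigenvalue G η → θ ≤ η)
    (𝒞 : Set (Finset V))
    (hclq : ∀ C ∈ 𝒞, G.IsClique (C : Set V))
    -- each clique in 𝒞 is a Delsarte clique: it has exactly `1 + k/(-θ_D)` vertices
    (hDel : ∀ C ∈ 𝒞, (C.card : ℝ) = 1 + (b 0 : ℝ) / (-θ))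
    -- Γ is geometric w.r.t. 𝒞: every edge lies in a unique clique of 𝒞
    (hedge : ∀ x y : V, G.Adj x y → ∃! C : Finset V, C ∈ 𝒞 ∧ x ∈ C ∧ y ∈ C)
    (ψ₁ τ₂ : ℕ)
    -- ψ₁: number of neighbours in C of a vertex at distance 1 from C
    (hψ : ∀ C ∈ 𝒞, ∀ x : V, x ∉ C → (∃ z ∈ C, G.Adj x z) →
      {z : V | z ∈ C ∧ G.Adj x z}.ncard = ψ₁)
    -- τ₂: number of cliques of 𝒞 containing y at distance 1 from x, for d(x,y) = 2
    (hτ : ∀ x y : V, G.dist x y = 2 →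
      {C : Finset V | C ∈ 𝒞 ∧ y ∈ C ∧ x ∉ C ∧ ∃ z ∈ C, G.Adj x z}.ncard = τ₂) :
    ψ₁ ≤ τ₂ :=
  stmt17_general G D b c hDRG hD 𝒞 hclq hedge ψ₁ τ₂ hψ hτ
end
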